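/- arXiv:2412.11570 — 3 statements merged into one kernel-verified Lean document; each statement's English description precedes it below -/
import Mathlib

section
/- For every positive integer κ, all quaternions x₁, x₂ ∈ ℍ, every homogeneous polynomial P(X,Y) of degree κ with complex coefficients, and all (X₀,Y₀) ∈ ℂ², one has ∫_ℍ exp(2πi·tr(ȳx₂))·exp(−2π(N(x₁)+N(y)))·P((X₀,Y₀)·(A(x̄₁) − √−1·A(ȳ))) dy = exp(−2π(N(x₁)+N(x₂)))·P((X₀,Y₀)·A(x̄₁+x̄₂)). (This expresses that the Archimedean test function φ_{0,∞}(X) = e(√−1·ᵗX̄X)·σ_κ((1,−√−1)X̄) has partial Fourier transform I_∞φ_{0,∞}(x₁,x₂) = e(√−1·(N(x₁)+N(x₂)))·σ_κ(x̄₁+x̄₂).) -/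
/-!
Identify `ℍ` with `ℝ⁴`. The exponential factors combine into `exp(-2πN(x₁))` times the Gaussian
`G(y) = exp(-2π|y|² + c·y)` with `c = 4πi·x₂`, and the two entries of
`(X₀,Y₀)·(A(x̄₁) − iA(ȳ))` are affine forms `w_j + v_j·y` whose coefficient vectors are isotropic:
`v_i·v_j = 0` for all `i, j`. Hence the complex directional derivative `∑ₗ (v_i)ₗ ∂ₗ` kills every
polynomial `h` in these forms, and integrating `∑ₗ (v_i)ₗ ∂ₗ (h G)` by parts gives
`∫ (v_i·y) h G = (v_i·c / 4π) ∫ h G`. By induction on `P`,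
`∫ P(w + v·y) G = P(w + v·c/4π) ∫ G`, where `w + v·c/4π = (X₀,Y₀)·A(x̄₁ + x̄₂)` and
`4 ∫ G = exp(-2πN(x₂))`.
-/

open MeasureTheory
open scoped ENNReal

noncomputable section

/-- The ℝ-algebra embedding `A : ℍ → M₂(ℂ)`. -/
def Amap (q : Quaternion ℝ) : Matrix (Fin 2) (Fin 2) ℂ :=
  !![(q.re : ℂ) + (q.imI : ℂ) * Complex.I, (q.imJ : ℂ) + (q.imK : ℂ) * Complex.I;
     -(q.imJ : ℂ) + (q.imK : ℂ) * Complex.I, (q.re : ℂ) - (q.imI : ℂ) * Complex.I]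

/-- The coordinate identification `ℝ⁴ ≅ ℍ`. -/
def quatOf (a : Fin 4 → ℝ) : Quaternion ℝ := ⟨a 0, a 1, a 2, a 3⟩

/-- Reduced trace `tr(x) = x + x̄ = 2·Re(x)`. -/
def qtr (x : Quaternion ℝ) : ℝ := 2 * x.re

/-- Reduced norm `N(x) = x·x̄`. -/
def qN (x : Quaternion ℝ) : ℝ := x.re ^ 2 + x.imI ^ 2 + x.imJ ^ 2 + x.imK ^ 2

open Complex Real

theorem integral_fderiv_apply_eq_zero {E F : Type*} [NormedAddCommGroup E] [NormedSpace ℝ E]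
    [FiniteDimensional ℝ E] [MeasurableSpace E] [BorelSpace E] {μ : Measure E} [μ.IsAddHaarMeasure]
    [NormedAddCommGroup F] [NormedSpace ℝ F]
    {g : E → F} {g' : E → E →L[ℝ] F} {v : E} (hg : ∀ x, HasFDerivAt g (g' x) x)
    (hgi : Integrable g μ) (hg'i : Integrable (fun x => g' x v) μ) :
    ∫ x, g' x v ∂μ = 0 := by
  have := integral_bilinear_hasFDerivAt_right_eq_neg_left_of_integrable
    (B := ContinuousLinearMap.lsmul ℝ ℝ) (f := fun _ => (1 : ℝ)) (f' := fun _ => 0) (v := v)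
    (by simp) (by simpa using hg'i) (by simpa using hgi)
    (fun x _ => hasFDerivAt_const _ _) (fun x _ => hg x)
  simpa using this

namespace GaussianPoly

open MvPolynomial

variable {ι : Type*} [Fintype ι]

def linForm (a : ι → ℂ) : (ι → ℝ) →L[ℝ] ℂ :=
  ∑ i, a i • (ofRealCLM.comp (ContinuousLinearMap.proj i))

@[simp] lemma linForm_apply (a : ι → ℂ) (y : ι → ℝ) : linForm a y = ∑ i, a i * y i := by
  simp [linForm]

lemma linForm_single [DecidableEq ι] (a : ι → ℂ) (ℓ : ι) : linForm a (Pi.single ℓ 1) = a ℓ := by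
  simp [Pi.single_apply, apply_ite]

def gaussian (c : ι → ℂ) (y : ι → ℝ) : ℂ :=
  cexp (-(2 * π) * ∑ i, (y i : ℂ) ^ 2 + ∑ i, c i * y i)

lemma hasFDerivAt_gaussian (c : ι → ℂ) (y : ι → ℝ) :
    HasFDerivAt (gaussian c) (gaussian c y • linForm (fun i => c i - 4 * π * y i)) y := by
  let p (i : ι) : (ι → ℝ) →L[ℝ] ℂ := ofRealCLM.comp (ContinuousLinearMap.proj i)
  have hexp : HasFDerivAt (fun y : ι → ℝ => -(2 * π) * ∑ i, (y i : ℂ) ^ 2 + ∑ i, c i * y i)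
      (linForm fun i => c i - 4 * π * y i) y := by
    have := ((HasFDerivAt.fun_sum (u := Finset.univ) fun i _ =>
      ((p i).hasFDerivAt (x := y)).pow 2).const_mul (-(2 * π : ℂ))).add
        (HasFDerivAt.fun_sum (u := Finset.univ) fun i _ =>
          ((p i).hasFDerivAt (x := y)).const_mul (c i))
    refine this.congr_fderiv (ContinuousLinearMap.ext fun v => ?_)
    simp only [p, ContinuousLinearMap.comp_apply, ContinuousLinearMap.proj_apply, ofRealCLM_apply,
      add_apply, smul_apply, sum_apply, smul_eq_mul, Finset.mul_sum, linForm_apply,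
      ← Finset.sum_add_distrib]
    exact Finset.sum_congr rfl fun i _ => by
      simp only [Nat.add_one_sub_one, pow_one, nsmul_eq_mul, Nat.cast_ofNat]; ring
  exact hexp.cexp

lemma integrable_gaussian (c : ι → ℂ) : Integrable (gaussian c) :=
  GaussianFourier.integrable_cexp_neg_mul_sum_add (by simp [pi_pos]) c

lemma integral_gaussian (c : ι → ℂ) :
    ∫ y, gaussian c y = (2⁻¹ : ℂ) ^ (Fintype.card ι / 2 : ℂ) * cexp ((∑ i, c i ^ 2) / (8 * π)) := by
  simp only [gaussian]
  rw [GaussianFourier.integral_cexp_neg_mul_sum_add (by simp [pi_pos]) c]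
  have : (π : ℂ) ≠ 0 := by exact_mod_cast pi_ne_zero
  congr 2
  · field_simp
  · ring

lemma continuous_gaussian (c : ι → ℂ) : Continuous (gaussian c) :=
  continuous_iff_continuousAt.2 fun y => (hasFDerivAt_gaussian c y).continuousAt

lemma gaussian_add (c b : ι → ℂ) (y : ι → ℝ) :
    gaussian (c + b) y = gaussian c y * cexp (linForm b y) := by
  simp only [gaussian, linForm_apply, ← Complex.exp_add, Pi.add_apply, add_mul,
    Finset.sum_add_distrib, add_assoc]

lemma norm_gaussian_add_single [DecidableEq ι] (c : ι → ℂ) (ℓ : ι) (s : ℝ) (y : ι → ℝ) :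
    ‖gaussian (c + Pi.single ℓ (s : ℂ)) y‖ = ‖gaussian c y‖ * Real.exp (s * y ℓ) := by
  rw [gaussian_add, norm_mul, Complex.norm_exp]
  simp [Pi.single_apply]

lemma integrable_coord_mul_mul_gaussian {f : (ι → ℝ) → ℂ} (hf : Continuous f)
    (hfi : ∀ c, Integrable (fun y => f y * gaussian c y)) (ℓ : ι) (c : ι → ℂ) :
    Integrable (fun y => (y ℓ : ℂ) * f y * gaussian c y) := by
  classical
  -- `|t| ≤ eᵗ + e⁻ᵗ`, and shifting `c` by `±eₗ` multiplies the Gaussian by `e^{±yₗ}`.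
  refine ((hfi (c + Pi.single ℓ ((1 : ℝ) : ℂ))).norm.add
    (hfi (c + Pi.single ℓ ((-1 : ℝ) : ℂ))).norm).mono'
    (((continuous_ofReal.comp (continuous_apply ℓ)).mul hf).mul
      (continuous_gaussian c)).aestronglyMeasurable (ae_of_all _ fun y => ?_)
  have habs : |y ℓ| ≤ Real.exp (y ℓ) + Real.exp (-y ℓ) := by
    rcases abs_cases (y ℓ) with ⟨h, _⟩ | ⟨h, _⟩ <;> rw [h] <;>
      linarith [Real.add_one_le_exp (y ℓ), Real.add_one_le_exp (-y ℓ), Real.exp_pos (y ℓ),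
        Real.exp_pos (-y ℓ)]
  simp only [Pi.add_apply, norm_mul, norm_gaussian_add_single, Complex.norm_real,
    Real.norm_eq_abs, one_mul, neg_one_mul]
  calc |y ℓ| * ‖f y‖ * ‖gaussian c y‖
      ≤ (Real.exp (y ℓ) + Real.exp (-y ℓ)) * ‖f y‖ * ‖gaussian c y‖ := by gcongr
    _ = _ := by ring

variable {κ : Type*} [Fintype κ]

def affineForms (w : κ → ℂ) (v : κ → ι → ℂ) (y : ι → ℝ) : κ → ℂ :=
  fun j => w j + linForm (v j) y

variable (w : κ → ℂ) (v : κ → ι → ℂ)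

omit [Fintype κ] in
lemma continuous_eval_affineForms (P : MvPolynomial κ ℂ) :
    Continuous fun y => eval (affineForms w v y) P :=
  (continuous_eval P).comp
    (continuous_pi fun j => continuous_const.add (linForm (v j)).continuous)

omit [Fintype κ] in
lemma integrable_eval_affineForms_mul_gaussian (P : MvPolynomial κ ℂ) (c : ι → ℂ) :
    Integrable fun y => eval (affineForms w v y) P * gaussian c y := by
  induction P using induction_on generalizing c with
  | C a => simpa using (integrable_gaussian c).const_mul a
  | add p q hp hq => simpa only [map_add, add_mul] using (hp c).fun_add (hq c)
  | mul_X p i hp =>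
    have hmom ℓ := (integrable_coord_mul_mul_gaussian (continuous_eval_affineForms w v p) hp ℓ c)
    refine (((hp c).const_mul (w i)).add (integrable_finsetSum Finset.univ fun ℓ _ =>
      (hmom ℓ).const_mul (v i ℓ))).congr (ae_of_all _ fun y => ?_)
    simp only [Pi.add_apply, map_mul, eval_X, affineForms, linForm_apply,
      mul_add, add_mul, Finset.mul_sum, Finset.sum_mul]
    congr 1
    · ring
    · exact Finset.sum_congr rfl fun ℓ _ => by ring

omit [Fintype κ] in
lemma integrable_linForm_mul_eval_affineForms_mul_gaussian (P : MvPolynomial κ ℂ) (a c : ι → ℂ) :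
    Integrable fun y => linForm a y * eval (affineForms w v y) P * gaussian c y := by
  have hmom := integrable_coord_mul_mul_gaussian (continuous_eval_affineForms w v P)
    (integrable_eval_affineForms_mul_gaussian w v P) (c := c)
  refine (integrable_finsetSum Finset.univ fun ℓ _ => (hmom ℓ).const_mul (a ℓ)).congr
    (ae_of_all _ fun y => ?_)
  simp only [linForm_apply, Finset.sum_mul, mul_assoc]

lemma hasFDerivAt_eval_affineForms (P : MvPolynomial κ ℂ) (y : ι → ℝ) :
    HasFDerivAt (fun y => eval (affineForms w v y) P)
      (∑ j, eval (affineForms w v y) (pderiv j P) • linForm (v j)) y := by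
  classical
  induction P using induction_on with
  | C a =>
    simp only [eval_C]
    refine (hasFDerivAt_const (𝕜 := ℝ) a y).congr_fderiv (ContinuousLinearMap.ext fun z => ?_)
    simp
  | add p q hp hq =>
    simp only [map_add]
    refine (hp.fun_add hq).congr_fderiv (ContinuousLinearMap.ext fun z => ?_)
    simp [add_mul, Finset.sum_add_distrib]
  | mul_X p i hp =>
    have hi : HasFDerivAt (fun y => affineForms w v y i) (linForm (v i)) y :=
      (linForm (v i)).hasFDerivAt.const_add (w i)
    simp only [map_mul, eval_X]
    refine (hp.fun_mul hi).congr_fderiv (ContinuousLinearMap.ext fun z => ?_)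
    simp [pderiv_X, Pi.single_apply, apply_ite (eval _), ite_mul,
      add_mul, Finset.sum_add_distrib, Finset.mul_sum, mul_assoc]

/-- The integrand is `∑ₗ aₗ ∂ₗ (h G)` with `h = P ∘ affineForms w v` and `G = gaussian c`. -/
lemma integral_lineDeriv_eval_affineForms_mul_gaussian (P : MvPolynomial κ ℂ) (a c : ι → ℂ) :
    ∫ y, ∑ ℓ, a ℓ * (((c ℓ - 4 * π * y ℓ) * eval (affineForms w v y) P
      + ∑ j, v j ℓ * eval (affineForms w v y) (pderiv j P))
        * gaussian c y) = 0 := by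
  classical
  have hderiv y := (hasFDerivAt_eval_affineForms w v P y).fun_mul (hasFDerivAt_gaussian c y)
  have happly y ℓ : (eval (affineForms w v y) P
      • (gaussian c y • linForm (fun i => c i - 4 * π * y i)) + gaussian c y
      • ∑ j, eval (affineForms w v y) (pderiv j P) • linForm (v j))
        (Pi.single ℓ 1)
      = ((c ℓ - 4 * π * y ℓ) * eval (affineForms w v y) P
        + ∑ j, v j ℓ * eval (affineForms w v y) (pderiv j P))
          * gaussian c y := by
    simp only [add_apply, smul_apply, sum_apply, smul_eq_mul, linForm_single, add_mul,
      Finset.mul_sum, Finset.sum_mul]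
    congr 1
    · ring
    · exact Finset.sum_congr rfl fun j _ => by ring
  have hint ℓ : Integrable fun y => ((c ℓ - 4 * π * y ℓ) * eval (affineForms w v y) P
      + ∑ j, v j ℓ * eval (affineForms w v y) (pderiv j P))
        * gaussian c y := by
    refine ((((integrable_eval_affineForms_mul_gaussian w v P c).const_mul (c ℓ)).sub
      ((integrable_coord_mul_mul_gaussian (continuous_eval_affineForms w v P)
        (integrable_eval_affineForms_mul_gaussian w v P) ℓ c).const_mul (4 * π))).add
      (integrable_finsetSum Finset.univ fun j _ =>
        (integrable_eval_affineForms_mul_gaussian w v (pderiv j P) c).const_mul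
          (v j ℓ))).congr
      (ae_of_all _ fun y => ?_)
    simp only [Pi.add_apply, Pi.sub_apply, sub_mul, add_mul, Finset.sum_mul]
    congr 1
    · ring
    · exact Finset.sum_congr rfl fun j _ => by ring
  rw [integral_finsetSum _ fun ℓ _ => (hint ℓ).const_mul (a ℓ)]
  refine Finset.sum_eq_zero fun ℓ _ => ?_
  simp_rw [integral_const_mul, ← happly]
  rw [integral_fderiv_apply_eq_zero hderiv (integrable_eval_affineForms_mul_gaussian w v P c)
    (by simpa only [happly] using hint ℓ), mul_zero]

lemma integral_linForm_mul_eval_affineForms_mul_gaussian (P : MvPolynomial κ ℂ)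
    (a c : ι → ℂ) (ha : ∀ j, a ⬝ᵥ v j = 0) :
    ∫ y, linForm a y * eval (affineForms w v y) P * gaussian c y
      = a ⬝ᵥ c / (4 * π) * ∫ y, eval (affineForms w v y) P * gaussian c y := by
  have hsum y : ∑ ℓ, a ℓ * (((c ℓ - 4 * π * y ℓ) * eval (affineForms w v y) P
      + ∑ j, v j ℓ * eval (affineForms w v y) (pderiv j P))
        * gaussian c y)
      = a ⬝ᵥ c * (eval (affineForms w v y) P * gaussian c y)
        - 4 * π * (linForm a y * eval (affineForms w v y) P * gaussian c y) := by
    have hvanish : ∑ ℓ, a ℓ * ∑ j, v j ℓ *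
        eval (affineForms w v y) (pderiv j P) = 0 := by
      simp_rw [Finset.mul_sum]
      rw [Finset.sum_comm]
      refine Finset.sum_eq_zero fun j _ => ?_
      rw [← zero_mul (eval (affineForms w v y) (pderiv j P)),
        ← ha j, dotProduct, Finset.sum_mul]
      exact Finset.sum_congr rfl fun ℓ _ => by ring
    rw [dotProduct, linForm_apply, Finset.sum_mul, Finset.sum_mul, Finset.sum_mul, Finset.mul_sum,
      ← Finset.sum_sub_distrib, ← sub_eq_zero, ← Finset.sum_sub_distrib,
      ← zero_mul (gaussian c y), ← hvanish, Finset.sum_mul]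
    exact Finset.sum_congr rfl fun ℓ _ => by ring
  have h0 := integral_lineDeriv_eval_affineForms_mul_gaussian w v P a c
  rw [integral_congr_ae (ae_of_all _ hsum),
    integral_sub ((integrable_eval_affineForms_mul_gaussian w v P c).const_mul _)
      ((integrable_linForm_mul_eval_affineForms_mul_gaussian w v P a c).const_mul _),
    integral_const_mul, integral_const_mul] at h0
  have hπ : (π : ℂ) ≠ 0 := by exact_mod_cast pi_ne_zero
  field_simp
  linear_combination -h0

theorem integral_eval_affineForms_mul_gaussian (hv : ∀ i j, v i ⬝ᵥ v j = 0)
    (P : MvPolynomial κ ℂ) (c : ι → ℂ) :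
    ∫ y, eval (affineForms w v y) P * gaussian c y
      = eval (fun j => w j + v j ⬝ᵥ c / (4 * π)) P * ∫ y, gaussian c y := by
  induction P using induction_on with
  | C a => simp [integral_const_mul]
  | add p q hp hq =>
    simp only [map_add, add_mul]
    rw [integral_add (integrable_eval_affineForms_mul_gaussian w v p c)
      (integrable_eval_affineForms_mul_gaussian w v q c), hp, hq]
  | mul_X p i hp =>
    have hsplit y : eval (affineForms w v y) (p * MvPolynomial.X i) * gaussian c y
        = w i * (eval (affineForms w v y) p * gaussian c y)
          + linForm (v i) y * eval (affineForms w v y) p * gaussian c y := by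
      simp only [map_mul, eval_X, affineForms]
      ring
    rw [integral_congr_ae (ae_of_all _ hsplit), integral_add
      ((integrable_eval_affineForms_mul_gaussian w v p c).const_mul _)
      (integrable_linForm_mul_eval_affineForms_mul_gaussian w v p (v i) c),
      integral_const_mul,
      integral_linForm_mul_eval_affineForms_mul_gaussian w v p (v i) c (hv i), hp]
    simp only [map_mul, eval_X]
    ring

end GaussianPoly

open GaussianPoly

def amapCoeffs (X₀ Y₀ : ℂ) : Fin 2 → Fin 4 → ℂ :=
  ![![X₀, -I * X₀, Y₀, -I * Y₀], ![Y₀, I * Y₀, -X₀, -I * X₀]]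

lemma vecMul_Amap_star_quatOf (X₀ Y₀ : ℂ) (y : Fin 4 → ℝ) :
    Matrix.vecMul ![X₀, Y₀] (Amap (star (quatOf y))) = fun j => linForm (amapCoeffs X₀ Y₀ j) y := by
  funext j
  fin_cases j <;>
    simp only [Matrix.vecMul, dotProduct, Fin.sum_univ_two, Fin.sum_univ_four, Amap, amapCoeffs,
      linForm_apply, Matrix.of_apply, Matrix.cons_val', Matrix.cons_val_zero, Matrix.cons_val_one,
      Matrix.cons_val_fin_one, Matrix.cons_val, Fin.zero_eta, Fin.mk_one, Quaternion.re_star,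
      Quaternion.imI_star, Quaternion.imJ_star, Quaternion.imK_star, ofReal_neg] <;>
    simp only [quatOf] <;> ring

lemma amapCoeffs_dotProduct (X₀ Y₀ : ℂ) (i j : Fin 2) :
    amapCoeffs X₀ Y₀ i ⬝ᵥ amapCoeffs X₀ Y₀ j = 0 := by
  fin_cases i <;> fin_cases j <;>
    simp only [dotProduct, amapCoeffs, Fin.sum_univ_four, Matrix.cons_val', Matrix.cons_val_zero,
      Matrix.cons_val_one, Matrix.cons_val_fin_one, Matrix.cons_val, Fin.zero_eta, Fin.mk_one] <;>
    ring_nf <;> simp [I_sq]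

lemma Amap_add (p q : Quaternion ℝ) : Amap (p + q) = Amap p + Amap q := by
  ext i j
  fin_cases i <;> fin_cases j <;>
    simp only [Amap, Matrix.add_apply, Matrix.of_apply, Matrix.cons_val', Matrix.cons_val_zero,
      Matrix.cons_val_one, Matrix.cons_val_fin_one, Fin.zero_eta, Fin.mk_one, Quaternion.re_add,
      Quaternion.imI_add, Quaternion.imJ_add, Quaternion.imK_add, ofReal_add] <;> ring

lemma vecMul_Amap_sub_eq_affineForms (X₀ Y₀ : ℂ) (x : Quaternion ℝ) (y : Fin 4 → ℝ) :
    Matrix.vecMul ![X₀, Y₀] (Amap (star x) - I • Amap (star (quatOf y)))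
      = affineForms (Matrix.vecMul ![X₀, Y₀] (Amap (star x)))
          (fun j => -I • amapCoeffs X₀ Y₀ j) y := by
  rw [Matrix.vecMul_sub, Matrix.vecMul_smul, vecMul_Amap_star_quatOf]
  funext j
  simp [affineForms, linForm_apply, Finset.mul_sum, sub_eq_add_neg, mul_assoc]

lemma neg_I_smul_amapCoeffs_dotProduct (X₀ Y₀ : ℂ) (i j : Fin 2) :
    (-I • amapCoeffs X₀ Y₀ i) ⬝ᵥ (-I • amapCoeffs X₀ Y₀ j) = 0 := by
  simp [amapCoeffs_dotProduct]

lemma vecMul_Amap_star_add_star_quatOf (X₀ Y₀ : ℂ) (x : Quaternion ℝ) (ξ : Fin 4 → ℝ) :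
    Matrix.vecMul ![X₀, Y₀] (Amap (star x + star (quatOf ξ)))
      = fun j => Matrix.vecMul ![X₀, Y₀] (Amap (star x)) j
        + (-I • amapCoeffs X₀ Y₀ j) ⬝ᵥ (fun ℓ => 4 * π * I * ξ ℓ) / (4 * π) := by
  rw [Amap_add, Matrix.vecMul_add, vecMul_Amap_star_quatOf]
  funext j
  rw [Pi.add_apply, dotProduct, linForm_apply, Finset.sum_div]
  congr 1
  refine Finset.sum_congr rfl fun ℓ _ => ?_
  have hπ : (π : ℂ) ≠ 0 := by exact_mod_cast pi_ne_zero
  simp only [Pi.smul_apply, smul_eq_mul]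
  field_simp
  linear_combination amapCoeffs X₀ Y₀ j ℓ * ξ ℓ * I_sq

lemma exp_qtr_mul_exp_qN (x : Quaternion ℝ) (ξ y : Fin 4 → ℝ) :
    cexp (2 * π * I * ((qtr (star (quatOf y) * quatOf ξ) : ℝ) : ℂ))
        * cexp (-(2 * π) * ((qN x + qN (quatOf y) : ℝ) : ℂ))
      = cexp (-(2 * π) * (qN x : ℂ)) * gaussian (fun ℓ => 4 * π * I * ξ ℓ) y := by
  rw [gaussian, ← Complex.exp_add, ← Complex.exp_add]
  congr 1
  simp only [qtr, qN, Quaternion.re_mul, Quaternion.re_star, Quaternion.imI_star,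
    Quaternion.imJ_star, Quaternion.imK_star, Fin.sum_univ_four, ofReal_mul, ofReal_add, ofReal_sub,
    ofReal_neg, ofReal_pow, ofReal_ofNat]
  simp only [quatOf]
  ring

lemma four_mul_integral_gaussian (ξ : Fin 4 → ℝ) :
    4 * ∫ y, gaussian (fun ℓ => 4 * π * I * ξ ℓ) y = cexp (-(2 * π) * (qN (quatOf ξ) : ℂ)) := by
  have hπ : (π : ℂ) ≠ 0 := by exact_mod_cast pi_ne_zero
  rw [GaussianPoly.integral_gaussian, Fintype.card_fin,
    show ((4 : ℕ) / 2 : ℂ) = (2 : ℕ) by norm_num,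
    cpow_natCast, ← mul_assoc, show (4 : ℂ) * 2⁻¹ ^ 2 = 1 by norm_num, one_mul]
  congr 1
  simp only [qN, quatOf, Fin.sum_univ_four, ofReal_add, ofReal_pow]
  field_simp
  linear_combination 16 * ((ξ 0 : ℂ) ^ 2 + (ξ 1 : ℂ) ^ 2 + (ξ 2 : ℂ) ^ 2 + (ξ 3 : ℂ) ^ 2) * I_sq

theorem stmt2_general (x₁ x₂ : Quaternion ℝ)
    (P : MvPolynomial (Fin 2) ℂ) (X₀ Y₀ : ℂ) :
    (∫ a : Fin 4 → ℝ,
        Complex.exp (2 * (Real.pi : ℂ) * Complex.I * ((qtr (star (quatOf a) * x₂) : ℝ) : ℂ))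
          * Complex.exp (-(2 * (Real.pi : ℂ)) * (((qN x₁ + qN (quatOf a)) : ℝ) : ℂ))
          * MvPolynomial.eval
              (Matrix.vecMul ![X₀, Y₀]
                (Amap (star x₁) - Complex.I • Amap (star (quatOf a)))) P
        ∂((4 : ℝ≥0∞) • volume))
      = Complex.exp (-(2 * (Real.pi : ℂ)) * (((qN x₁ + qN x₂) : ℝ) : ℂ))
          * MvPolynomial.eval
              (Matrix.vecMul ![X₀, Y₀] (Amap (star x₁ + star x₂))) P := by
  obtain ⟨ξ, rfl⟩ : ∃ ξ, quatOf ξ = x₂ := ⟨![x₂.re, x₂.imI, x₂.imJ, x₂.imK], rfl⟩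
  rw [integral_smul_measure, integral_congr_ae (ae_of_all _ fun y => by
      rw [exp_qtr_mul_exp_qN, vecMul_Amap_sub_eq_affineForms, mul_assoc, mul_comm (gaussian _ y)]),
    integral_const_mul, integral_eval_affineForms_mul_gaussian _ _
      (neg_I_smul_amapCoeffs_dotProduct X₀ Y₀), ← vecMul_Amap_star_add_star_quatOf,
    ENNReal.toReal_ofNat,
    real_smul, ofReal_add, mul_add, Complex.exp_add, ← four_mul_integral_gaussian]
  push_cast
  ring

/-- for a positive integer κ, quaternions x₁, x₂, a homogeneous polynomial P of
degree κ and (X₀,Y₀) ∈ ℂ²,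
`∫_ℍ exp(2πi·tr(ȳx₂))·exp(−2π(N(x₁)+N(y)))·P((X₀,Y₀)·(A(x̄₁) − √−1·A(ȳ))) dy
  = exp(−2π(N(x₁)+N(x₂)))·P((X₀,Y₀)·A(x̄₁+x̄₂))`,
the measure on ℍ ≅ ℝ⁴ being 4 times Lebesgue measure. -/
theorem stmt2 (κ : ℕ) (hκ : 0 < κ) (x₁ x₂ : Quaternion ℝ)
    (P : MvPolynomial (Fin 2) ℂ) (hP : P.IsHomogeneous κ) (X₀ Y₀ : ℂ) :
    (∫ a : Fin 4 → ℝ,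
        Complex.exp (2 * (Real.pi : ℂ) * Complex.I * ((qtr (star (quatOf a) * x₂) : ℝ) : ℂ))
          * Complex.exp (-(2 * (Real.pi : ℂ)) * (((qN x₁ + qN (quatOf a)) : ℝ) : ℂ))
          * MvPolynomial.eval
              (Matrix.vecMul ![X₀, Y₀]
                (Amap (star x₁) - Complex.I • Amap (star (quatOf a)))) P
        ∂((4 : ℝ≥0∞) • volume))
      = Complex.exp (-(2 * (Real.pi : ℂ)) * (((qN x₁ + qN x₂) : ℝ) : ℂ))
          * MvPolynomial.eval
              (Matrix.vecMul ![X₀, Y₀] (Amap (star x₁ + star x₂))) P :=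
  stmt2_general x₁ x₂ P X₀ Y₀
end
end

section
/- For every y = (y₁,y₂;y₃,y₄) ∈ ℚ_p^{2×2} one has σ(p·y₂)·σ(p·y₄)·Σ_{a ∈ ℤ_p/p²ℤ_p} σ(p^{−1}(y₁+a·y₂))·σ(p^{−1}(y₃+a·y₄)) = [−1,−1,−1,−1](y)·σ(det y) + p·[0,0,0,0](y)·σ(p^{−1}·det y) − [−1,0,−1,0](y)·σ(det y) + p²·[1,1,1,1](y) − p·[0,1,0,1](y). -/
/-! Split according to `M = max ‖y₂‖ ‖y₄‖`. If `M ≤ p⁻¹`, every summand equals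
`σ(p⁻¹y₁)·σ(p⁻¹y₃)`. If `M = p^k` with `k ∈ {0, 1}`, say `‖y₂‖ = p^k`, then
`y₁ + a·y₂ ∈ pℤ_p` means `a ≡ z := -y₁/y₂ (mod p^(k+1))`, which has `p^(1-k)` solutions
modulo `p²` when `z ∈ ℤ_p`; for these `a`, `y₃ + a·y₄ ≡ y₃ + z·y₄ = -det y / y₂ (mod p)`, so the
second condition becomes `‖det y‖ ≤ p^(k-1)`. The right-hand side is the sum of these three
contributions, cut out by the indicators of `M ≤ p`, `M ≤ 1` and `M ≤ p⁻¹`. -/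

noncomputable section
open scoped Classical

/-- The characteristic function σ of ℤ_p inside ℚ_p: `σ(x) = 1` if `x ∈ ℤ_p`, else 0. -/
def pind {p : ℕ} [Fact p.Prime] (x : ℚ_[p]) : ℝ := if ‖x‖ ≤ 1 then 1 else 0

/-- `[i₁,i₂,i₃,i₄](y) = σ(p^{−i₁}y₁)·σ(p^{−i₂}y₂)·σ(p^{−i₃}y₃)·σ(p^{−i₄}y₄)`. -/
def brk {p : ℕ} [Fact p.Prime] (i₁ i₂ i₃ i₄ : ℤ) (y₁ y₂ y₃ y₄ : ℚ_[p]) : ℝ :=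
  pind ((p : ℚ_[p]) ^ (-i₁) * y₁) * pind ((p : ℚ_[p]) ^ (-i₂) * y₂)
    * pind ((p : ℚ_[p]) ^ (-i₃) * y₃) * pind ((p : ℚ_[p]) ^ (-i₄) * y₄)

open Finset

section Ultrametric

variable {K : Type*} [NormedField K] [IsUltrametricDist K]

lemma IsUltrametricDist.norm_add_le_iff_of_norm_le {x y : K} {t : ℝ} (hy : ‖y‖ ≤ t) :
    ‖x + y‖ ≤ t ↔ ‖x‖ ≤ t := by
  refine ⟨fun h => ?_, fun h => (norm_add_le_max x y).trans (max_le h hy)⟩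
  simpa using (norm_add_le_max (x + y) (-y)).trans (max_le h (by rwa [norm_neg]))

lemma IsUltrametricDist.norm_sub_le_of_le {x y : K} {t : ℝ} (hx : ‖x‖ ≤ t) (hy : ‖y‖ ≤ t) :
    ‖x - y‖ ≤ t := by
  rw [sub_eq_add_neg]
  exact (norm_add_le_max x (-y)).trans (max_le hx (by rwa [norm_neg]))

lemma IsUltrametricDist.norm_det_le {y₁ y₂ y₃ y₄ : K} {s t : ℝ} (hs : 0 ≤ s)
    (h₁ : ‖y₁‖ ≤ s) (h₂ : ‖y₂‖ ≤ t) (h₃ : ‖y₃‖ ≤ s) (h₄ : ‖y₄‖ ≤ t) :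
    ‖y₁ * y₄ - y₂ * y₃‖ ≤ s * t := by
  have ht : 0 ≤ t := (norm_nonneg _).trans h₂
  refine norm_sub_le_of_le ?_ ?_ <;> rw [norm_mul]
  · exact mul_le_mul h₁ h₄ (norm_nonneg _) hs
  · rw [mul_comm s]; exact mul_le_mul h₂ h₃ (norm_nonneg _) ht

lemma IsUltrametricDist.norm_le_of_norm_det_le {y₁ y₂ y₃ y₄ : K} {t : ℝ} (ht : 0 < t)
    (h₁ : ‖y₁‖ ≤ t) (h₂ : ‖y₂‖ = t) (h₄ : ‖y₄‖ ≤ t) (hdet : ‖y₁ * y₄ - y₂ * y₃‖ ≤ t ^ 2) :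
    ‖y₃‖ ≤ t := by
  have h : ‖y₂ * y₃‖ ≤ t ^ 2 := by
    rw [show y₂ * y₃ = y₁ * y₄ - (y₁ * y₄ - y₂ * y₃) by ring]
    refine norm_sub_le_of_le ?_ hdet
    rw [norm_mul, sq]
    exact mul_le_mul h₁ h₄ (norm_nonneg _) ht.le
  rw [norm_mul, h₂, sq] at h
  exact le_of_mul_le_mul_left h ht

end Ultrametric

namespace Padic

variable {p : ℕ} [Fact p.Prime]

lemma norm_le_inv_or_eq_one_or_eq_or_lt (x : ℚ_[p]) :
    ‖x‖ ≤ (p : ℝ)⁻¹ ∨ ‖x‖ = 1 ∨ ‖x‖ = p ∨ (p : ℝ) < ‖x‖ := by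
  have h₀ := norm_le_pow_iff_norm_lt_pow_add_one x (-1)
  have h₁ := norm_le_pow_iff_norm_lt_pow_add_one x 0
  norm_num at h₀ h₁
  rcases lt_or_ge ‖x‖ 1 with h | h
  · exact .inl (h₀.mpr h)
  rcases lt_or_ge ‖x‖ p with h' | h'
  · exact .inr (.inl (le_antisymm (h₁.mpr h') h))
  · exact .inr (.inr h'.eq_or_lt')

lemma card_filter_range_norm_natCast_sub_le (z : ℚ_[p]) {m n : ℕ} (hnm : n ≤ m) :
    #{a ∈ range (p ^ m) | ‖((a : ℕ) : ℚ_[p]) - z‖ ≤ (p : ℝ) ^ (-n : ℤ)} =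
      if ‖z‖ ≤ 1 then p ^ (m - n) else 0 := by
  have hp := (Fact.out : p.Prime).pos
  split_ifs with hz
  · set r := PadicInt.appr ⟨z, hz⟩ n
    have hr : ‖(r : ℚ_[p]) - z‖ ≤ (p : ℝ) ^ (-n : ℤ) := by
      rw [norm_sub_rev]
      exact (PadicInt.norm_le_pow_iff_mem_span_pow _ n).mpr (PadicInt.appr_spec n ⟨z, hz⟩)
    have hmod (a : ℕ) : ‖(a : ℚ_[p]) - z‖ ≤ (p : ℝ) ^ (-n : ℤ) ↔ a ≡ r [MOD p ^ n] := by
      rw [show (a : ℚ_[p]) - z = ((a - r : ℤ) : ℚ_[p]) + (r - z) by push_cast; ring,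
        IsUltrametricDist.norm_add_le_iff_of_norm_le hr, norm_int_le_pow_iff_dvd,
        Nat.ModEq.comm, Nat.modEq_iff_dvd]
      push_cast; rfl
    simp_rw [hmod, ← Nat.count_eq_card_filter_range, Nat.count_modEq_card _ (pow_pos hp n),
      Nat.pow_div hnm hp, Nat.mod_eq_zero_of_dvd (pow_dvd_pow p hnm)]
    simp
  · rw [card_eq_zero, filter_eq_empty_iff]
    intro a _ ha
    have h1 : ‖(a : ℚ_[p]) - z‖ ≤ 1 := ha.trans (zpow_le_one_of_nonpos₀ (mod_cast hp) (by omega))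
    rw [← norm_neg, neg_sub, sub_eq_add_neg, IsUltrametricDist.norm_add_le_iff_of_norm_le
      (by simpa using IsUltrametricDist.norm_natCast_le_one ℚ_[p] a)] at h1
    exact hz h1

end Padic

section Indicator

variable {p : ℕ} [Fact p.Prime]

lemma pind_zpow_mul (j : ℤ) (x : ℚ_[p]) :
    pind ((p : ℚ_[p]) ^ j * x) = if ‖x‖ ≤ (p : ℝ) ^ j then 1 else 0 := by
  have hpj : (0 : ℝ) < (p : ℝ) ^ j := zpow_pos (mod_cast (Fact.out : p.Prime).pos) j
  simp only [pind, norm_mul, norm_zpow, Padic.norm_p, inv_zpow, inv_mul_le_iff₀ hpj, mul_one]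

lemma pind_pow_mul (k : ℕ) (x : ℚ_[p]) :
    pind ((p : ℚ_[p]) ^ k * x) = if ‖x‖ ≤ (p : ℝ) ^ k then 1 else 0 := by
  exact_mod_cast pind_zpow_mul k x

lemma pind_inv_mul (x : ℚ_[p]) :
    pind ((p : ℚ_[p])⁻¹ * x) = if ‖x‖ ≤ (p : ℝ)⁻¹ then 1 else 0 := by
  simpa using pind_zpow_mul (-1) x

lemma pind_neg (x : ℚ_[p]) : pind (-x) = pind x := by
  simp only [pind, norm_neg]

lemma pind_zpow_mul_mul_pind (j : ℤ) (x y : ℚ_[p]) :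
    pind ((p : ℚ_[p]) ^ j * x) * pind ((p : ℚ_[p]) ^ j * y) =
      if max ‖x‖ ‖y‖ ≤ (p : ℝ) ^ j then 1 else 0 := by
  rw [pind_zpow_mul, pind_zpow_mul, ite_zero_mul_ite_zero, one_mul]
  exact if_congr max_le_iff.symm rfl rfl

lemma brk_eq_mul_ite (i j : ℤ) (y₁ y₂ y₃ y₄ : ℚ_[p]) :
    brk i j i j y₁ y₂ y₃ y₄ =
      pind ((p : ℚ_[p]) ^ (-i) * y₁) * pind ((p : ℚ_[p]) ^ (-i) * y₃) *
        if max ‖y₂‖ ‖y₄‖ ≤ (p : ℝ) ^ (-j) then 1 else 0 := by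
  rw [← pind_zpow_mul_mul_pind, brk]
  ring

lemma pind_inv_mul_add_mul_of_norm_le {u : ℚ_[p]} (hu : ‖u‖ ≤ (p : ℝ)⁻¹) (c : ℚ_[p]) (a : ℕ) :
    pind ((p : ℚ_[p])⁻¹ * (c + (a : ℚ_[p]) * u)) = pind ((p : ℚ_[p])⁻¹ * c) := by
  have hau : ‖(a : ℚ_[p]) * u‖ ≤ (p : ℝ)⁻¹ := by
    rw [norm_mul]
    exact (mul_le_of_le_one_left (norm_nonneg _)
      (IsUltrametricDist.norm_natCast_le_one ℚ_[p] a)).trans hu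
  simp only [pind_inv_mul, IsUltrametricDist.norm_add_le_iff_of_norm_le hau]

end Indicator

section LatticeSum

variable {p : ℕ} [Fact p.Prime] {y₁ y₂ y₃ y₄ : ℚ_[p]}

lemma sum_pind_of_max_norm_le_inv (m : ℕ) (h : max ‖y₂‖ ‖y₄‖ ≤ (p : ℝ)⁻¹) :
    ∑ a ∈ range (p ^ m),
        pind ((p : ℚ_[p])⁻¹ * (y₁ + (a : ℚ_[p]) * y₂)) *
          pind ((p : ℚ_[p])⁻¹ * (y₃ + (a : ℚ_[p]) * y₄)) =
      (p : ℝ) ^ m * (pind ((p : ℚ_[p])⁻¹ * y₁) * pind ((p : ℚ_[p])⁻¹ * y₃)) := by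
  rw [max_le_iff] at h
  simp only [pind_inv_mul_add_mul_of_norm_le h.1, pind_inv_mul_add_mul_of_norm_le h.2,
    sum_const, card_range, nsmul_eq_mul, Nat.cast_pow]

lemma sum_pind_of_norm_eq_of_norm_le {k m : ℕ} (hkm : k < m)
    (h₂ : ‖y₂‖ = (p : ℝ) ^ k) (h₄ : ‖y₄‖ ≤ (p : ℝ) ^ k) :
    ∑ a ∈ range (p ^ m),
        pind ((p : ℚ_[p])⁻¹ * (y₁ + (a : ℚ_[p]) * y₂)) *
          pind ((p : ℚ_[p])⁻¹ * (y₃ + (a : ℚ_[p]) * y₄)) =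
      (p : ℝ) ^ (m - k - 1) * (pind ((p : ℚ_[p]) ^ k * y₁) * pind ((p : ℚ_[p]) ^ k * y₃) *
        pind ((p : ℚ_[p]) ^ ((k : ℤ) - 1) * (y₁ * y₄ - y₂ * y₃))) := by
  have hp : (0 : ℝ) < p := mod_cast (Fact.out : p.Prime).pos
  have hpk : (0 : ℝ) < (p : ℝ) ^ k := pow_pos hp k
  have hy₂ : y₂ ≠ 0 := norm_pos_iff.mp (h₂ ▸ hpk)
  set z := -y₁ / y₂
  set d := y₁ * y₄ - y₂ * y₃
  have hpow : (p : ℝ) ^ (-(k + 1 : ℕ) : ℤ) = (p : ℝ)⁻¹ / (p : ℝ) ^ k := by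
    rw [zpow_neg, zpow_natCast, pow_succ, div_eq_mul_inv, mul_inv, mul_comm]
  have hterm (a : ℕ) :
      pind ((p : ℚ_[p])⁻¹ * (y₁ + (a : ℚ_[p]) * y₂)) *
          pind ((p : ℚ_[p])⁻¹ * (y₃ + (a : ℚ_[p]) * y₄)) =
        (if ‖(a : ℚ_[p]) - z‖ ≤ (p : ℝ) ^ (-(k + 1 : ℕ) : ℤ) then 1 else 0) *
          if ‖d‖ ≤ (p : ℝ) ^ ((k : ℤ) - 1) then 1 else 0 := by
    have e₁ : y₁ + a * y₂ = y₂ * (a - z) := by simp only [z]; field_simp; ring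
    have e₃ : y₃ + a * y₄ = -d / y₂ + (a - z) * y₄ := by simp only [z, d]; field_simp; ring
    have hfirst : (p : ℝ) ^ k * ‖(a : ℚ_[p]) - z‖ ≤ (p : ℝ)⁻¹ ↔
        ‖(a : ℚ_[p]) - z‖ ≤ (p : ℝ) ^ (-(k + 1 : ℕ) : ℤ) := by
      rw [hpow, le_div_iff₀' hpk]
    rw [pind_inv_mul, pind_inv_mul, e₁, e₃, norm_mul, h₂]
    by_cases ha : ‖(a : ℚ_[p]) - z‖ ≤ (p : ℝ) ^ (-(k + 1 : ℕ) : ℤ)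
    · have hsmall : ‖((a : ℚ_[p]) - z) * y₄‖ ≤ (p : ℝ)⁻¹ := by
        rw [norm_mul]
        calc ‖(a : ℚ_[p]) - z‖ * ‖y₄‖ ≤ (p : ℝ) ^ (-(k + 1 : ℕ) : ℤ) * (p : ℝ) ^ k :=
              mul_le_mul ha h₄ (norm_nonneg _) (by positivity)
          _ = (p : ℝ)⁻¹ := by rw [hpow, div_mul_cancel₀ _ hpk.ne']
      have hdet : ‖-d / y₂‖ ≤ (p : ℝ)⁻¹ ↔ ‖d‖ ≤ (p : ℝ) ^ ((k : ℤ) - 1) := by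
        rw [norm_div, norm_neg, h₂, div_le_iff₀ hpk, zpow_sub₀ hp.ne', zpow_natCast, zpow_one,
          div_eq_inv_mul]
      simp only [if_pos (hfirst.mpr ha), if_pos ha,
        IsUltrametricDist.norm_add_le_iff_of_norm_le hsmall, hdet]
    · rw [if_neg (mt hfirst.mp ha), if_neg ha, zero_mul, zero_mul]
  have hz : ‖z‖ ≤ 1 ↔ ‖y₁‖ ≤ (p : ℝ) ^ k := by
    rw [norm_div, norm_neg, h₂, div_le_one hpk]
  rw [sum_congr rfl fun a _ => hterm a, ← sum_mul, sum_boole,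
    Padic.card_filter_range_norm_natCast_sub_le z (by omega : k + 1 ≤ m),
    pind_pow_mul, pind_pow_mul, pind_zpow_mul]
  simp only [hz]
  by_cases h₁ : ‖y₁‖ ≤ (p : ℝ) ^ k
  · by_cases hd : ‖d‖ ≤ (p : ℝ) ^ ((k : ℤ) - 1)
    · have h₃ : ‖y₃‖ ≤ (p : ℝ) ^ k := by
        refine IsUltrametricDist.norm_le_of_norm_det_le hpk h₁ h₂ h₄ (hd.trans ?_)
        rw [← zpow_natCast, ← zpow_natCast, ← zpow_mul]
        exact zpow_le_zpow_right₀ (mod_cast (Fact.out : p.Prime).one_lt.le) (by omega)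
      simp [h₁, hd, h₃, Nat.sub_sub]
    · simp [hd]
  · simp [h₁]

lemma sum_pind_of_max_norm_eq {k m : ℕ} (hkm : k < m) (h : max ‖y₂‖ ‖y₄‖ = (p : ℝ) ^ k) :
    ∑ a ∈ range (p ^ m),
        pind ((p : ℚ_[p])⁻¹ * (y₁ + (a : ℚ_[p]) * y₂)) *
          pind ((p : ℚ_[p])⁻¹ * (y₃ + (a : ℚ_[p]) * y₄)) =
      (p : ℝ) ^ (m - k - 1) * (pind ((p : ℚ_[p]) ^ k * y₁) * pind ((p : ℚ_[p]) ^ k * y₃) *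
        pind ((p : ℚ_[p]) ^ ((k : ℤ) - 1) * (y₁ * y₄ - y₂ * y₃))) := by
  rcases le_total ‖y₄‖ ‖y₂‖ with h₄₂ | h₂₄
  · exact sum_pind_of_norm_eq_of_norm_le hkm (max_eq_left h₄₂ ▸ h) (h ▸ le_max_right _ _)
  · have hswap := sum_pind_of_norm_eq_of_norm_le (y₁ := y₃) (y₃ := y₁) hkm
      (max_eq_right h₂₄ ▸ h) (h ▸ le_max_left _ _)
    rw [show y₃ * y₂ - y₄ * y₁ = -(y₁ * y₄ - y₂ * y₃) by ring, mul_neg, pind_neg] at hswap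
    rw [sum_congr rfl fun a _ => mul_comm _ _, hswap]
    ring

lemma pind_mul_pind_mul_pind_det_of_max_norm_le_inv (h : max ‖y₂‖ ‖y₄‖ ≤ (p : ℝ)⁻¹) :
    pind y₁ * pind y₃ * pind ((p : ℚ_[p])⁻¹ * (y₁ * y₄ - y₂ * y₃)) = pind y₁ * pind y₃ := by
  rw [max_le_iff] at h
  by_cases h₁ : ‖y₁‖ ≤ 1
  · by_cases h₃ : ‖y₃‖ ≤ 1
    · have hd := IsUltrametricDist.norm_det_le zero_le_one h₁ h.1 h₃ h.2
      rw [one_mul] at hd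
      rw [pind_inv_mul, if_pos hd, mul_one]
    · simp [pind, h₃]
  · simp [pind, h₁]

end LatticeSum

/-- for y = (y₁,y₂;y₃,y₄) ∈ ℚ_p^{2×2} with det y = y₁y₄ − y₂y₃,
`σ(py₂)·σ(py₄)·Σ_{a ∈ ℤ_p/p²ℤ_p} σ(p⁻¹(y₁+ay₂))·σ(p⁻¹(y₃+ay₄))
  = [−1,−1,−1,−1](y)·σ(det y) + p·[0,0,0,0](y)·σ(p⁻¹·det y) − [−1,0,−1,0](y)·σ(det y)
    + p²·[1,1,1,1](y) − p·[0,1,0,1](y)`. -/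
theorem stmt13 (p : ℕ) [Fact p.Prime] (y₁ y₂ y₃ y₄ : ℚ_[p]) :
    pind ((p : ℚ_[p]) * y₂) * pind ((p : ℚ_[p]) * y₄) *
        ∑ a ∈ Finset.range (p ^ 2),
          pind ((p : ℚ_[p])⁻¹ * (y₁ + (a : ℚ_[p]) * y₂))
            * pind ((p : ℚ_[p])⁻¹ * (y₃ + (a : ℚ_[p]) * y₄))
      = brk (-1) (-1) (-1) (-1) y₁ y₂ y₃ y₄ * pind (y₁ * y₄ - y₂ * y₃)
          + (p : ℝ) * brk 0 0 0 0 y₁ y₂ y₃ y₄ * pind ((p : ℚ_[p])⁻¹ * (y₁ * y₄ - y₂ * y₃))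
          - brk (-1) 0 (-1) 0 y₁ y₂ y₃ y₄ * pind (y₁ * y₄ - y₂ * y₃)
          + (p : ℝ) ^ 2 * brk 1 1 1 1 y₁ y₂ y₃ y₄
          - (p : ℝ) * brk 0 1 0 1 y₁ y₂ y₃ y₄ := by
  have hp : (1 : ℝ) < p := mod_cast (Fact.out : p.Prime).one_lt
  have hL : pind ((p : ℚ_[p]) * y₂) * pind ((p : ℚ_[p]) * y₄) =
      if max ‖y₂‖ ‖y₄‖ ≤ p then 1 else 0 := by
    simpa using pind_zpow_mul_mul_pind 1 y₂ y₄
  simp only [brk_eq_mul_ite, neg_neg, neg_zero, zpow_one, zpow_zero, zpow_neg_one, one_mul]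
  rw [hL]
  have hinv : (p : ℝ)⁻¹ < 1 := inv_lt_one_of_one_lt₀ hp
  obtain ⟨x, hx⟩ : ∃ x : ℚ_[p], max ‖y₂‖ ‖y₄‖ = ‖x‖ :=
    (max_choice ‖y₂‖ ‖y₄‖).elim (⟨y₂, ·⟩) (⟨y₄, ·⟩)
  rcases Padic.norm_le_inv_or_eq_one_or_eq_or_lt x with h | h | h | h <;> rw [← hx] at h
  · rw [sum_pind_of_max_norm_le_inv 2 h, if_pos (h.trans (hinv.trans hp).le),
      if_pos (h.trans hinv.le), if_pos h]
    linear_combination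
      (-(p : ℝ)) * pind_mul_pind_mul_pind_det_of_max_norm_le_inv (y₁ := y₁) (y₃ := y₃) h
  · rw [sum_pind_of_max_norm_eq (k := 0) (by norm_num) (by simpa using h), h, if_pos hp.le,
      if_pos le_rfl, if_neg hinv.not_ge]
    norm_num
    ring
  · rw [sum_pind_of_max_norm_eq (k := 1) (by norm_num) (by simpa using h), h, if_pos le_rfl,
      if_neg hp.not_ge, if_neg (hinv.trans hp).not_ge]
    norm_num
  · rw [if_neg h.not_ge, if_neg (hp.trans h).not_ge, if_neg ((hinv.trans hp).trans h).not_ge]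
    ring
end
end

section
/- For all x, y ∈ ℚ_p the following two identities hold: (i) Σ_{(b,c,d) ∈ Λ₁} σ(x+p^{−1}c)·σ(y+p^{−1}d) = (p−1)·σ(x)·σ(y) + σ(px)·σ(py) − σ(px)·σ(y); (ii) Σ_{(b,c,d) ∈ Λ₂} σ(x+p^{−1}c)·σ(y+p^{−1}d) = (p−1)·σ(px)·σ(py) + σ(px)·σ(y) − p·σ(x)·σ(y). -/
/-
Write `F c = σ(x + c/p)` and `G d = σ(y + d/p)` for `c, d ∈ 𝔽_p`. Grouping the sum over `Λ_i` by
`(c, d)`, the entry `b` only contributes the number of `b ∈ 𝔽_p` for which `(b,c;c,d)` has rank `i`,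
and this count is an affine combination of `1`, `[d = 0]` and `[c = 0 ∧ d = 0]`: for `d ≠ 0` exactly
one `b` makes the determinant `bd - c²` vanish. What remains are `F 0 = σ(x)` and
`∑_c F c = σ(px)`, i.e. the ball `p⁻¹ℤ_p` is the disjoint union of the `p` balls `-c/p + ℤ_p`.
-/

noncomputable section
open scoped Classical

/-- `Λ_i`: the set of triples (b,c,d) with b,c,d ∈ {0,…,p−1} such that the symmetric matrix
`(b,c;c,d)` over `𝔽_p = ℤ/pℤ` has rank i. -/
def Lam (p : ℕ) [Fact p.Prime] (i : ℕ) : Finset (ℕ × ℕ × ℕ) :=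
  (Finset.range p ×ˢ Finset.range p ×ˢ Finset.range p).filter
    fun t => Matrix.rank
      !![((t.1 : ℕ) : ZMod p), ((t.2.1 : ℕ) : ZMod p);
         ((t.2.1 : ℕ) : ZMod p), ((t.2.2 : ℕ) : ZMod p)] = i

open Finset

namespace Matrix

variable {K : Type*} [Field K]

theorem rank_eq_zero_iff {m n : Type*} [Fintype n] (A : Matrix m n K) : A.rank = 0 ↔ A = 0 := by
  rw [rank, Submodule.finrank_eq_zero, LinearMap.range_eq_bot]
  constructor
  · intro h
    ext i j
    simpa using congrFun (LinearMap.congr_fun h (Pi.single j 1)) i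
  · rintro rfl
    exact mulVecLin_zero

theorem rank_eq_card_iff_det_ne_zero {n : Type*} [Fintype n] [DecidableEq n] (A : Matrix n n K) :
    A.rank = Fintype.card n ↔ A.det ≠ 0 := by
  refine ⟨fun h => ?_, rank_of_det_ne_zero⟩
  have hrange : LinearMap.range A.mulVecLin = ⊤ :=
    Submodule.eq_top_of_finrank_eq (by rw [← rank, h, Module.finrank_fintype_fun_eq_card])
  have hsurj : Function.Surjective A.mulVec := LinearMap.range_eq_top.mp hrange
  exact ((isUnit_iff_isUnit_det A).mp (mulVec_surjective_iff_isUnit.mp hsurj)).ne_zero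

theorem rank_fin_two_eq_one_iff (A : Matrix (Fin 2) (Fin 2) K) :
    A.rank = 1 ↔ A.det = 0 ∧ A ≠ 0 := by
  have h2 : A.rank ≠ 2 ↔ A.det = 0 := by
    simpa using A.rank_eq_card_iff_det_ne_zero.not
  have h0 : A.rank ≠ 0 ↔ A ≠ 0 := A.rank_eq_zero_iff.not
  have hle := A.rank_le_card_width
  rw [Fintype.card_fin] at hle
  rw [← h2, ← h0]
  omega

theorem rank_of_fin_two_symm_eq_two_iff (b c d : K) :
    (!![b, c; c, d]).rank = 2 ↔ b * d ≠ c * c := by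
  simpa [det_fin_two_of, sub_ne_zero] using rank_eq_card_iff_det_ne_zero !![b, c; c, d]

theorem rank_of_fin_two_symm_eq_one_iff (b c d : K) :
    (!![b, c; c, d]).rank = 1 ↔ b * d = c * c ∧ ¬(b = 0 ∧ c = 0 ∧ d = 0) := by
  rw [rank_fin_two_eq_one_iff, det_fin_two_of, sub_eq_zero, Ne, ← Matrix.ext_iff]
  simp only [Fin.forall_fin_two, of_apply, cons_val', cons_val_zero, cons_val_one, empty_val',
    cons_val_fin_one, zero_apply]
  tauto

end Matrix

section CountRank

open Matrix

variable {K : Type*} [Field K] [Fintype K] [DecidableEq K] {R : Type*} [CommRing R]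

-- Both counts are written as `α + β [d = 0] + γ [c = 0] [d = 0]`, the shape that
-- `sum_sum_affine_indicator_mul` evaluates.
theorem card_rank_of_fin_two_symm_eq_two (c d : K) :
    (#{b | (!![b, c; c, d]).rank = 2} : R) = (Fintype.card K - 1) + 1 * (if d = 0 then 1 else 0)
      + -Fintype.card K * ((if c = 0 then 1 else 0) * (if d = 0 then 1 else 0)) := by
  simp_rw [rank_of_fin_two_symm_eq_two_iff]
  rcases eq_or_ne d 0 with rfl | hd
  · rcases eq_or_ne c 0 with rfl | hc <;> simp [*]
  · have : ({b | b * d ≠ c * c} : Finset K) = univ.erase (c * c / d) := by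
      ext b
      simp [eq_div_iff hd]
    simp [this, hd, card_erase_of_mem, Nat.cast_sub Fintype.card_pos]

theorem card_rank_of_fin_two_symm_eq_one (c d : K) :
    (#{b | (!![b, c; c, d]).rank = 1} : R) = 1 + -1 * (if d = 0 then 1 else 0)
      + (Fintype.card K - 1) * ((if c = 0 then 1 else 0) * (if d = 0 then 1 else 0)) := by
  simp_rw [rank_of_fin_two_symm_eq_one_iff]
  rcases eq_or_ne d 0 with rfl | hd
  · rcases eq_or_ne c 0 with rfl | hc
    · simp [filter_ne', card_erase_of_mem, Nat.cast_sub Fintype.card_pos]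
    · simp [hc]
  · have : ({b | b * d = c * c} : Finset K) = {c * c / d} := by
      ext b
      simp [eq_div_iff hd]
    simp [this, hd]

end CountRank

theorem sum_filter_triple_eq_sum_card_smul {α : Type*} [Fintype α] {M : Type*} [AddCommMonoid M]
    (P : α → α → α → Prop) [∀ b c d, Decidable (P b c d)] (f : α → α → M) :
    ∑ t : α × α × α with P t.1 t.2.1 t.2.2, f t.2.1 t.2.2 = ∑ c, ∑ d, #{b | P b c d} • f c d := by
  simp only [sum_filter, Fintype.sum_prod_type]
  rw [sum_comm]
  refine sum_congr rfl fun c _ => ?_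
  rw [sum_comm]
  refine sum_congr rfl fun d _ => ?_
  rw [← sum_filter, sum_const]

theorem sum_sum_affine_indicator_mul {ι : Type*} [Fintype ι] [DecidableEq ι] {R : Type*}
    [CommRing R] (c₀ d₀ : ι) (α β γ : R) (f g : ι → R) :
    ∑ c, ∑ d, (α + β * (if d = d₀ then 1 else 0)
        + γ * ((if c = c₀ then 1 else 0) * (if d = d₀ then 1 else 0))) * (f c * g d)
      = α * ((∑ c, f c) * ∑ d, g d) + β * ((∑ c, f c) * g d₀) + γ * (f c₀ * g d₀) := by
  have hf : f c₀ = ∑ c, (if c = c₀ then 1 else 0) * f c := by simp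
  have hg : g d₀ = ∑ d, (if d = d₀ then 1 else 0) * g d := by simp
  rw [hf, hg]
  simp only [sum_mul_sum]
  simp only [mul_sum, ← sum_add_distrib]
  exact sum_congr rfl fun c _ => sum_congr rfl fun d _ => by ring

section

variable {p : ℕ} [Fact p.Prime]

theorem sum_Lam_eq (i : ℕ) {M : Type*} [AddCommMonoid M] (f : ℕ → ℕ → M) :
    ∑ t ∈ Lam p i, f t.2.1 t.2.2
      = ∑ c : ZMod p, ∑ d : ZMod p, #{b | (!![b, c; c, d]).rank = i} • f c.val d.val := by
  rw [← sum_filter_triple_eq_sum_card_smul (fun b c d : ZMod p => (!![b, c; c, d]).rank = i)]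
  have hval {n : ℕ} (hn : n ∈ range p) : (n : ZMod p).val = n :=
    ZMod.val_cast_of_lt (mem_range.mp hn)
  refine sum_nbij' (fun t => ((t.1 : ZMod p), (t.2.1 : ZMod p), (t.2.2 : ZMod p)))
    (fun t => (t.1.val, t.2.1.val, t.2.2.val)) ?_ ?_ ?_ ?_ ?_
  · intro t ht
    simp only [Lam, mem_filter, mem_product] at ht
    simpa using ht.2
  · intro t ht
    simp only [Lam, mem_filter, mem_product, mem_range, ZMod.val_lt, ZMod.natCast_zmod_val,
      true_and]
    simpa using ht
  · intro t ht
    simp only [Lam, mem_filter, mem_product] at ht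
    simp [hval ht.1.1, hval ht.1.2.1, hval ht.1.2.2]
  · intro t _
    simp
  · intro t ht
    simp only [Lam, mem_filter, mem_product] at ht
    simp [hval ht.1.2.1, hval ht.1.2.2]

theorem Padic.norm_inv_p_mul_le_one_iff (z : ℚ_[p]) : ‖(p : ℚ_[p])⁻¹ * z‖ ≤ 1 ↔ ‖z‖ < 1 := by
  have hp : (0 : ℝ) < p := by exact_mod_cast (Fact.out : p.Prime).pos
  rw [norm_mul, norm_inv, Padic.norm_p, inv_inv, ← le_div_iff₀' hp, one_div, ← zpow_neg_one,
    Padic.norm_le_pow_iff_norm_lt_pow_add_one, neg_add_cancel, zpow_zero]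

theorem PadicInt.norm_lt_one_iff_toZMod_eq_zero (z : ℤ_[p]) :
    ‖z‖ < 1 ↔ PadicInt.toZMod z = 0 := by
  rw [← RingHom.mem_ker, PadicInt.ker_toZMod, IsLocalRing.mem_maximalIdeal, PadicInt.mem_nonunits]

theorem pind_add_inv_p_mul (x a : ℚ_[p]) :
    pind (x + (p : ℚ_[p])⁻¹ * a) = if ‖(p : ℚ_[p]) * x + a‖ < 1 then 1 else 0 := by
  have hp : (p : ℚ_[p]) ≠ 0 := by exact_mod_cast (Fact.out : p.Prime).ne_zero
  have hx : x + (p : ℚ_[p])⁻¹ * a = (p : ℚ_[p])⁻¹ * ((p : ℚ_[p]) * x + a) := by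
    field_simp
  rw [pind, hx]
  exact if_congr (Padic.norm_inv_p_mul_le_one_iff _) rfl rfl

theorem sum_pind_add_inv_p_mul (x : ℚ_[p]) :
    ∑ c : ZMod p, pind (x + (p : ℚ_[p])⁻¹ * (c.val : ℚ_[p])) = pind ((p : ℚ_[p]) * x) := by
  simp_rw [pind_add_inv_p_mul]
  rcases le_or_gt ‖(p : ℚ_[p]) * x‖ 1 with h | h
  · set z : ℤ_[p] := ⟨(p : ℚ_[p]) * x, h⟩
    have hc : ∀ c : ZMod p, ‖(p : ℚ_[p]) * x + c.val‖ < 1 ↔ c = -PadicInt.toZMod z := by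
      intro c
      have := PadicInt.norm_lt_one_iff_toZMod_eq_zero (z + (c.val : ℤ_[p]))
      simp only [PadicInt.norm_def, PadicInt.coe_add, PadicInt.coe_natCast, map_add, map_natCast,
        ZMod.natCast_zmod_val] at this
      rw [this, eq_neg_iff_add_eq_zero, add_comm]
    simp_rw [hc]
    rw [sum_ite_eq', if_pos (mem_univ _), pind, if_pos h]
  · have hc : ∀ c : ZMod p, ¬ ‖(p : ℚ_[p]) * x + c.val‖ < 1 := by
      intro c hc
      have hle := IsUltrametricDist.norm_add_le_max ((p : ℚ_[p]) * x + c.val) (-(c.val : ℚ_[p]))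
      rw [add_neg_cancel_right, norm_neg] at hle
      exact h.not_ge (hle.trans (max_le hc.le (IsUltrametricDist.norm_natCast_le_one ℚ_[p] c.val)))
    simp_rw [hc, if_false]
    rw [sum_const_zero, pind, if_neg h.not_ge]

end

/-- for all x, y ∈ ℚ_p,
(i) `Σ_{(b,c,d) ∈ Λ₁} σ(x+p⁻¹c)·σ(y+p⁻¹d) = (p−1)·σ(x)·σ(y) + σ(px)·σ(py) − σ(px)·σ(y)`;
(ii) `Σ_{(b,c,d) ∈ Λ₂} σ(x+p⁻¹c)·σ(y+p⁻¹d) = (p−1)·σ(px)·σ(py) + σ(px)·σ(y) − p·σ(x)·σ(y)`. -/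
theorem stmt15 (p : ℕ) [Fact p.Prime] (x y : ℚ_[p]) :
    (∑ t ∈ Lam p 1,
        pind (x + (p : ℚ_[p])⁻¹ * (t.2.1 : ℚ_[p]))
          * pind (y + (p : ℚ_[p])⁻¹ * (t.2.2 : ℚ_[p]))
      = ((p : ℝ) - 1) * pind x * pind y
          + pind ((p : ℚ_[p]) * x) * pind ((p : ℚ_[p]) * y)
          - pind ((p : ℚ_[p]) * x) * pind y) ∧
    (∑ t ∈ Lam p 2,
        pind (x + (p : ℚ_[p])⁻¹ * (t.2.1 : ℚ_[p]))
          * pind (y + (p : ℚ_[p])⁻¹ * (t.2.2 : ℚ_[p]))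
      = ((p : ℝ) - 1) * pind ((p : ℚ_[p]) * x) * pind ((p : ℚ_[p]) * y)
          + pind ((p : ℚ_[p]) * x) * pind y
          - (p : ℝ) * pind x * pind y) := by
  have hsum (i : ℕ) :
      ∑ t ∈ Lam p i, pind (x + (p : ℚ_[p])⁻¹ * (t.2.1 : ℚ_[p]))
          * pind (y + (p : ℚ_[p])⁻¹ * (t.2.2 : ℚ_[p]))
        = ∑ c : ZMod p, ∑ d : ZMod p, (#{b | (!![b, c; c, d]).rank = i} : ℝ)
            * (pind (x + (p : ℚ_[p])⁻¹ * (c.val : ℚ_[p]))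
              * pind (y + (p : ℚ_[p])⁻¹ * (d.val : ℚ_[p]))) := by
    simpa only [nsmul_eq_mul] using sum_Lam_eq i
      (fun m n => pind (x + (p : ℚ_[p])⁻¹ * (m : ℚ_[p])) * pind (y + (p : ℚ_[p])⁻¹ * (n : ℚ_[p])))
  have hzero (z : ℚ_[p]) : pind (z + (p : ℚ_[p])⁻¹ * ((0 : ZMod p).val : ℚ_[p])) = pind z := by
    simp
  simp only [hsum, card_rank_of_fin_two_symm_eq_one, card_rank_of_fin_two_symm_eq_two, ZMod.card,
    sum_sum_affine_indicator_mul, sum_pind_add_inv_p_mul, hzero]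
  constructor <;> ring
end
end
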